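/- arXiv:2301.06251 — 6 statements merged into one kernel-verified Lean document; each statement's English description precedes it below -/
import Mathlib

section
/- Let m, r, s be natural numbers with 1 ≤ s ≤ r ≤ m, let V := Fin m → ZMod 2, let B be a ZMod 2-submodule of V with finrank equal to s, and let φ : (Fin (m - s) → ZMod 2) ≃ₗ[ZMod 2] V ⧸ B be any ZMod 2-linear isomorphism. Then the image of RM(m, r) under the map f ↦ (f_{/B}) ∘ φ equals RM(m - s, r - s); in particular, for every f ∈ RM(m, r) the projected function (f_{/B}) ∘ φ lies in RM(m - s, r - s), and conversely every element of RM(m - s, r - s) arises as such a projection of some f ∈ RM(m, r). -/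
open scoped Classical

noncomputable section

/-- The monomial evaluation function `v_A(z) = ∏_{i ∈ A} z i`. -/
def vA (m : ℕ) (A : Finset (Fin m)) : (Fin m → ZMod 2) → ZMod 2 :=
  fun z => ∏ i ∈ A, z i

/-- The Reed–Muller code `RM(m, r)`: the span of the monomials of degree at most `r`. -/
def RM (m r : ℕ) : Submodule (ZMod 2) ((Fin m → ZMod 2) → ZMod 2) :=
  Submodule.span (ZMod 2) { f | ∃ A : Finset (Fin m), A.card ≤ r ∧ f = vA m A }

/-- The projection of `f` onto the cosets of the submodule `B`:
`f_{/B}(T) = ∑_{z : ⟦z⟧ = T} f z`. -/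
def proj (m : ℕ) (B : Submodule (ZMod 2) (Fin m → ZMod 2))
    (f : (Fin m → ZMod 2) → ZMod 2) : ((Fin m → ZMod 2) ⧸ B) → ZMod 2 :=
  fun T => ∑ z : Fin m → ZMod 2,
    if (Submodule.Quotient.mk z : (Fin m → ZMod 2) ⧸ B) = T then f z else 0

lemma RM_mono (m : ℕ) {a b : ℕ} (h : a ≤ b) : RM m a ≤ RM m b :=
  Submodule.span_mono (by rintro f ⟨A, hA, rfl⟩; exact ⟨A, hA.trans h, rfl⟩)

lemma zmod2_cases (x : ZMod 2) : x = 0 ∨ x = 1 := by revert x; decide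

lemma vA_mul (m : ℕ) (A B : Finset (Fin m)) : vA m A * vA m B = vA m (A ∪ B) := by
  funext z
  show (∏ i ∈ A, z i) * (∏ i ∈ B, z i) = ∏ i ∈ A ∪ B, z i
  by_cases h : ∃ i ∈ A ∪ B, z i = 0
  · obtain ⟨i, hi, hzi⟩ := h
    rw [Finset.prod_eq_zero hi hzi]
    rcases Finset.mem_union.1 hi with hiA | hiB
    · rw [Finset.prod_eq_zero hiA hzi, zero_mul]
    · rw [Finset.prod_eq_zero hiB hzi, mul_zero]
  · push_neg at h
    have h1 : ∀ i ∈ A ∪ B, z i = 1 := fun i hi =>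
      (zmod2_cases (z i)).resolve_left (h i hi)
    rw [Finset.prod_eq_one h1, Finset.prod_eq_one fun i hi => h1 i (Finset.mem_union_left _ hi),
      Finset.prod_eq_one fun i hi => h1 i (Finset.mem_union_right _ hi), one_mul]

lemma RM_mul {m a b : ℕ} {f g : (Fin m → ZMod 2) → ZMod 2}
    (hf : f ∈ RM m a) (hg : g ∈ RM m b) : f * g ∈ RM m (a + b) := by
  induction hf using Submodule.span_induction with
  | mem x hx =>
    obtain ⟨A, hA, rfl⟩ := hx
    induction hg using Submodule.span_induction with
    | mem y hy =>
      obtain ⟨C, hC, rfl⟩ := hy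
      rw [vA_mul]
      exact Submodule.subset_span ⟨A ∪ C, (Finset.card_union_le _ _).trans (add_le_add hA hC), rfl⟩
    | zero => rw [mul_zero]; exact zero_mem _
    | add y₁ y₂ _ _ h1 h2 => rw [mul_add]; exact add_mem h1 h2
    | smul c y _ h => rw [mul_smul_comm]; exact Submodule.smul_mem _ _ h
  | zero => rw [zero_mul]; exact zero_mem _
  | add x₁ x₂ _ _ h1 h2 => rw [add_mul]; exact add_mem h1 h2
  | smul c x _ h => rw [smul_mul_assoc]; exact Submodule.smul_mem _ _ h

lemma one_mem_RM (m r : ℕ) : (1 : (Fin m → ZMod 2) → ZMod 2) ∈ RM m r :=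
  Submodule.subset_span ⟨∅, by simp, by funext z; simp [vA]⟩

lemma functional_mem_RM {n : ℕ} (ℓ : ((Fin n → ZMod 2)) →ₗ[ZMod 2] ZMod 2) :
    (fun x => ℓ x) ∈ RM n 1 := by
  have key : (fun x : Fin n → ZMod 2 => ℓ x) =
      ∑ j : Fin n, ℓ (fun k => if j = k then 1 else 0) • vA n {j} := by
    funext x
    have hx : x = ∑ j : Fin n, x j • fun k => if j = k then (1 : ZMod 2) else 0 :=
      pi_eq_sum_univ x
    rw [Finset.sum_apply]
    conv_lhs => rw [hx]
    rw [map_sum]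
    refine Finset.sum_congr rfl fun j _ => ?_
    rw [map_smul]
    simp [vA, mul_comm]
  rw [key]
  exact Submodule.sum_mem _ fun j _ =>
    Submodule.smul_mem _ _ (Submodule.subset_span ⟨{j}, by simp, rfl⟩)

lemma prod_functionals_mem_RM {n : ℕ} {ι : Type*} (t : Finset ι)
    (u : ι → ((Fin n → ZMod 2) → ZMod 2)) (hu : ∀ i ∈ t, u i ∈ RM n 1) :
    (fun x => ∏ i ∈ t, u i x) ∈ RM n t.card := by
  induction t using Finset.induction_on with
  | empty => simpa [Pi.one_def] using one_mem_RM n 0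
  | @insert a t ha ih =>
    have : (fun x => ∏ i ∈ insert a t, u i x) = u a * fun x => ∏ i ∈ t, u i x := by
      funext x; rw [Finset.prod_insert ha]; rfl
    rw [this, Finset.card_insert_of_notMem ha, add_comm]
    exact RM_mul (hu a (Finset.mem_insert_self a t))
      (ih fun i hi => hu i (Finset.mem_insert_of_mem hi))

lemma proj_add (m : ℕ) (B : Submodule (ZMod 2) (Fin m → ZMod 2)) (f g) :
    proj m B (f + g) = proj m B f + proj m B g := by
  funext T
  simp only [proj, Pi.add_apply]
  rw [← Finset.sum_add_distrib]
  refine Finset.sum_congr rfl fun z _ => ?_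
  by_cases h : (Submodule.Quotient.mk z : (Fin m → ZMod 2) ⧸ B) = T <;> simp [h]

lemma proj_smul (m : ℕ) (B : Submodule (ZMod 2) (Fin m → ZMod 2)) (c : ZMod 2) (f) :
    proj m B (c • f) = c • proj m B f := by
  funext T
  simp only [proj, Pi.smul_apply]
  rw [Finset.smul_sum]
  refine Finset.sum_congr rfl fun z _ => ?_
  by_cases h : (Submodule.Quotient.mk z : (Fin m → ZMod 2) ⧸ B) = T <;> simp [h]

lemma proj_zero (m : ℕ) (B : Submodule (ZMod 2) (Fin m → ZMod 2)) :
    proj m B 0 = 0 := by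
  funext T
  simp only [proj, Pi.zero_apply]
  refine Finset.sum_eq_zero fun z _ => ?_
  by_cases h : (Submodule.Quotient.mk z : (Fin m → ZMod 2) ⧸ B) = T <;> simp [h]

lemma coset_sum (m : ℕ) (B : Submodule (ZMod 2) (Fin m → ZMod 2))
    (f : (Fin m → ZMod 2) → ZMod 2) (T : (Fin m → ZMod 2) ⧸ B) (z0 : Fin m → ZMod 2)
    (hz0 : (Submodule.Quotient.mk z0 : (Fin m → ZMod 2) ⧸ B) = T) :
    proj m B f T = ∑ b : B, f (z0 + b) := by
  have h1 : proj m B f T = ∑ w : Fin m → ZMod 2,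
      if (Submodule.Quotient.mk (z0 + w) : (Fin m → ZMod 2) ⧸ B) = T then f (z0 + w) else 0 :=
    (Fintype.sum_equiv (Equiv.addLeft z0) _ _ fun w => rfl).symm
  rw [h1]
  have h2 : ∀ w : Fin m → ZMod 2,
      ((Submodule.Quotient.mk (z0 + w) : (Fin m → ZMod 2) ⧸ B) = T) ↔ w ∈ B := by
    intro w
    rw [← hz0, Submodule.Quotient.eq]
    constructor
    · intro h; simpa using h
    · intro h; simpa using h
  calc (∑ w : Fin m → ZMod 2,
      if (Submodule.Quotient.mk (z0 + w) : (Fin m → ZMod 2) ⧸ B) = T then f (z0 + w) else 0)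
      = ∑ w : Fin m → ZMod 2, if w ∈ B then f (z0 + w) else 0 := by
        refine Finset.sum_congr rfl fun w _ => ?_
        rw [if_congr (h2 w) rfl rfl]
    _ = ∑ w ∈ Finset.univ.filter (fun w => w ∈ B), f (z0 + w) := by
        rw [Finset.sum_filter]
    _ = ∑ b : B, f (z0 + b) :=
        Finset.sum_subtype _ (fun x => by simp) (fun w => f (z0 + w))

lemma sum_monomial_over_subspace (m s : ℕ) (B : Submodule (ZMod 2) (Fin m → ZMod 2))
    (hB : Module.finrank (ZMod 2) B = s) (S : Finset (Fin m)) (hS : S.card < s) :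
    ∑ b : B, ∏ i ∈ S, (b : Fin m → ZMod 2) i = 0 := by
  have : ∃ b0 : B, b0 ≠ 0 ∧ ∀ i ∈ S, (b0 : Fin m → ZMod 2) i = 0 := by
    let L : B →ₗ[ZMod 2] (S → ZMod 2) :=
      LinearMap.pi fun i => (LinearMap.proj (i : Fin m)).comp B.subtype
    have hni : ¬ Function.Injective L := by
      intro hinj
      have := LinearMap.finrank_le_finrank_of_injective hinj
      rw [hB, Module.finrank_pi, Fintype.card_coe] at this
      omega
    rw [Function.not_injective_iff] at hni
    obtain ⟨b1, b2, hL, hne⟩ := hni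
    refine ⟨b1 - b2, sub_ne_zero.2 hne, fun i hi => ?_⟩
    have h3 : L (b1 - b2) = 0 := by rw [map_sub, hL, sub_self]
    exact congrFun h3 ⟨i, hi⟩
  obtain ⟨b0, hb0ne, hb0⟩ := this
  refine Finset.sum_ninvolution (fun b => b + b0) (fun b => ?_) (fun b _ => ?_)
    (fun b => Finset.mem_univ _) (fun b => ?_)
  · have : ∏ i ∈ S, ((b + b0 : B) : Fin m → ZMod 2) i = ∏ i ∈ S, (b : Fin m → ZMod 2) i := by
      refine Finset.prod_congr rfl fun i hi => ?_
      show ((b : Fin m → ZMod 2) + (b0 : Fin m → ZMod 2)) i = _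
      rw [Pi.add_apply, hb0 i hi, add_zero]
    rw [this]
    exact CharTwo.add_self_eq_zero _
  · intro h
    exact hb0ne (by simpa using congrArg (fun x => x - b) h)
  · show b + b0 + b0 = b
    have hz : b0 + b0 = 0 := by
      rw [← two_smul (ZMod 2) b0, show (2 : ZMod 2) = 0 by decide, zero_smul]
    rw [add_assoc, hz, add_zero]

theorem rm_projection (m r s : ℕ) (hs : 1 ≤ s) (hsr : s ≤ r) (hrm : r ≤ m)
    (B : Submodule (ZMod 2) (Fin m → ZMod 2))
    (hB : Module.finrank (ZMod 2) B = s)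
    (φ : (Fin (m - s) → ZMod 2) ≃ₗ[ZMod 2] (Fin m → ZMod 2) ⧸ B) :
    { g | ∃ f ∈ RM m r, g = (proj m B f) ∘ φ } = (RM (m - s) (r - s) : Set _) := by
  obtain ⟨W, hW⟩ := Submodule.exists_isCompl B
  set e := Submodule.quotientEquivOfIsCompl B W hW with he
  set ψ : (Fin (m - s) → ZMod 2) →ₗ[ZMod 2] (Fin m → ZMod 2) :=
    W.subtype ∘ₗ e.toLinearMap ∘ₗ φ.toLinearMap with hψdef
  have hψ : ∀ x, (Submodule.Quotient.mk (ψ x) : (Fin m → ZMod 2) ⧸ B) = φ x := fun x =>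
    Submodule.mk_quotientEquivOfIsCompl_apply hW (φ x)
  ext g
  constructor
  · rintro ⟨f, hf, rfl⟩
    show proj m B f ∘ φ ∈ RM (m - s) (r - s)
    induction hf using Submodule.span_induction with
    | mem f hfm =>
      obtain ⟨A, hA, rfl⟩ := hfm
      have key : proj m B (vA m A) ∘ φ =
          ∑ t ∈ A.powerset, (∑ b : B, ∏ i ∈ A \ t, (b : Fin m → ZMod 2) i) •
            fun x => ∏ i ∈ t, ψ x i := by
        funext x
        rw [Function.comp_apply, coset_sum m B _ (φ x) (ψ x) (hψ x)]
        have hexp : ∀ b : B, vA m A (ψ x + b) =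
            ∑ t ∈ A.powerset, (∏ i ∈ t, ψ x i) * ∏ i ∈ A \ t, (b : Fin m → ZMod 2) i := by
          intro b
          show ∏ i ∈ A, (ψ x + (b : Fin m → ZMod 2)) i = _
          simp only [Pi.add_apply]
          exact Finset.prod_add _ _ A
        rw [Finset.sum_congr rfl fun b _ => hexp b, Finset.sum_comm, Finset.sum_apply]
        refine Finset.sum_congr rfl fun t _ => ?_
        rw [Pi.smul_apply, smul_eq_mul, ← Finset.mul_sum, mul_comm]
      rw [key]
      refine Submodule.sum_mem _ fun t ht => ?_
      by_cases hc : (∑ b : B, ∏ i ∈ A \ t, (b : Fin m → ZMod 2) i) = 0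
      · rw [hc, zero_smul]; exact zero_mem _
      · refine Submodule.smul_mem _ _ ?_
        have hst : s ≤ (A \ t).card := by
          by_contra h
          exact hc (sum_monomial_over_subspace m s B hB _ (by omega))
        have htA : t ⊆ A := Finset.mem_powerset.1 ht
        have hcard : t.card ≤ r - s := by
          have h1 := Finset.card_sdiff_of_subset htA
          have h2 := Finset.card_le_card htA
          omega
        refine RM_mono _ hcard ?_
        exact prod_functionals_mem_RM t (fun i => fun x => ψ x i)
          (fun i _ => functional_mem_RM ((LinearMap.proj i).comp ψ))
    | zero =>
      rw [proj_zero]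
      have : ((0 : ((Fin m → ZMod 2) ⧸ B) → ZMod 2) ∘ φ) = 0 := by funext x; rfl
      rw [this]; exact zero_mem _
    | add f₁ f₂ _ _ h1 h2 =>
      rw [proj_add]
      have : ((proj m B f₁ + proj m B f₂) ∘ φ) = proj m B f₁ ∘ φ + proj m B f₂ ∘ φ := by
        funext x; rfl
      rw [this]; exact add_mem h1 h2
    | smul c f _ h =>
      rw [proj_smul]
      have : ((c • proj m B f) ∘ φ) = c • (proj m B f ∘ φ) := by funext x; rfl
      rw [this]; exact Submodule.smul_mem _ _ h
  · intro hg
    show ∃ f ∈ RM m r, g = proj m B f ∘ φ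
    have hg' : g ∈ RM (m - s) (r - s) := hg
    clear hg
    -- build the linear map q cutting out W
    have hdim : Module.finrank (ZMod 2) ((Fin m → ZMod 2) ⧸ W) =
        Module.finrank (ZMod 2) (Fin s → ZMod 2) := by
      have h1 := Submodule.finrank_quotient_add_finrank W
      have h2 := Submodule.finrank_add_eq_of_isCompl hW
      have h3 : Module.finrank (ZMod 2) (Fin m → ZMod 2) = m := by
        simp [Module.finrank_pi]
      have h4 : Module.finrank (ZMod 2) (Fin s → ZMod 2) = s := by
        simp [Module.finrank_pi]
      omega
    set e2 := LinearEquiv.ofFinrankEq _ _ hdim with he2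
    set q : (Fin m → ZMod 2) →ₗ[ZMod 2] (Fin s → ZMod 2) := e2.toLinearMap ∘ₗ W.mkQ with hqdef
    have hq : ∀ z, q z = 0 ↔ z ∈ W := by
      intro z
      rw [show q z = e2 (W.mkQ z) from rfl, LinearEquiv.map_eq_zero_iff,
        Submodule.mkQ_apply, Submodule.Quotient.mk_eq_zero]
    induction hg' using Submodule.span_induction with
    | mem g hgm =>
      obtain ⟨C, hC, rfl⟩ := hgm
      refine ⟨(fun z => vA (m - s) C (φ.symm (Submodule.Quotient.mk z))) *
        (fun z => ∏ k : Fin s, (1 + q z k)), ?_, ?_⟩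
      · have hmul : ((fun z => vA (m - s) C (φ.symm (Submodule.Quotient.mk z))) *
            (fun z => ∏ k : Fin s, (1 + q z k))) ∈ RM m ((r - s) + s) := by
          refine RM_mul ?_ ?_
          · refine RM_mono _ hC ?_
            exact prod_functionals_mem_RM C
              (fun i => fun z => (φ.symm (Submodule.Quotient.mk z)) i)
              (fun i _ => functional_mem_RM
                ((LinearMap.proj i).comp (φ.symm.toLinearMap ∘ₗ B.mkQ)))
          · have hp := prod_functionals_mem_RM (Finset.univ : Finset (Fin s))
              (fun k => fun z => 1 + q z k)
              (fun k _ => add_mem (one_mem_RM m 1)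
                (functional_mem_RM ((LinearMap.proj k).comp q)))
            simpa using hp
        rwa [Nat.sub_add_cancel hsr] at hmul
      · funext x
        set z0 : Fin m → ZMod 2 := (e (φ x) : Fin m → ZMod 2) with hz0def
        have hz0W : z0 ∈ W := (e (φ x)).2
        have hmk : (Submodule.Quotient.mk z0 : (Fin m → ZMod 2) ⧸ B) = φ x :=
          Submodule.mk_quotientEquivOfIsCompl_apply hW (φ x)
        rw [Function.comp_apply, coset_sum m B _ (φ x) z0 hmk]
        rw [Fintype.sum_eq_single (0 : B)]
        · show vA (m - s) C x =
            vA (m - s) C (φ.symm (Submodule.Quotient.mk (z0 + (0 : B)))) *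
              ∏ k : Fin s, (1 + q (z0 + (0 : B)) k)
          have h0 : z0 + ((0 : B) : Fin m → ZMod 2) = z0 := by
            rw [Submodule.coe_zero, add_zero]
          rw [h0, hmk, LinearEquiv.symm_apply_apply]
          have hq0 : q z0 = 0 := (hq z0).2 hz0W
          have : ∏ k : Fin s, (1 + q z0 k) = 1 := by
            refine Finset.prod_eq_one fun k _ => ?_
            rw [hq0]; simp
          rw [this, mul_one]
        · intro b hb
          show vA (m - s) C (φ.symm (Submodule.Quotient.mk (z0 + b))) *
              ∏ k : Fin s, (1 + q (z0 + b) k) = 0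
          have hnW : z0 + (b : Fin m → ZMod 2) ∉ W := by
            intro hmem
            have hbW : (b : Fin m → ZMod 2) ∈ W := by
              have := W.sub_mem hmem hz0W
              simpa using this
            have : (b : Fin m → ZMod 2) ∈ B ⊓ W := ⟨b.2, hbW⟩
            rw [hW.inf_eq_bot] at this
            exact hb (Subtype.ext (by simpa using this))
          have hqne : q (z0 + b) ≠ 0 := fun h => hnW ((hq _).1 h)
          obtain ⟨k, hk⟩ := Function.ne_iff.1 hqne
          have hk1 : q (z0 + b) k = 1 := (zmod2_cases _).resolve_left hk
          have : ∏ k : Fin s, (1 + q (z0 + b) k) = 0 := by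
            refine Finset.prod_eq_zero (Finset.mem_univ k) ?_
            rw [hk1]; decide
          rw [this, mul_zero]
    | zero =>
      exact ⟨0, zero_mem _, by rw [proj_zero]; funext x; rfl⟩
    | add g₁ g₂ _ _ h1 h2 =>
      obtain ⟨f₁, hf₁, rfl⟩ := h1
      obtain ⟨f₂, hf₂, rfl⟩ := h2
      exact ⟨f₁ + f₂, add_mem hf₁ hf₂, by rw [proj_add]; funext x; rfl⟩
    | smul c g _ h =>
      obtain ⟨f, hf, rfl⟩ := h
      exact ⟨c • f, Submodule.smul_mem _ _ hf, by rw [proj_smul]; funext x; rfl⟩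

end
end

section
/- For natural numbers r ≤ m, the ZMod 2-dimension (finrank) of the Reed–Muller code RM(m, r) equals ∑_{i=0}^{r} binomial(m, i). -/
/-! Evaluating a combination `∑ c_A • v_A` at the indicator vector of `S` gives `∑_{A ⊆ S} c_A`.
If the combination vanishes, all these subset sums vanish, and induction on `S` forces every
`c_A = 0`. So the monomials are linearly independent, the `v_A` with `|A| ≤ r` form a basis of
`RM(m, r)`, and there are `∑_{i ≤ r} C(m, i)` of them. -/

open Finset

theorem Finset.eq_zero_of_forall_sum_powerset_eq_zero {α M : Type*} [AddCommMonoid M]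
    {g : Finset α → M} (h : ∀ S : Finset α, ∑ A ∈ S.powerset, g A = 0) (S : Finset α) :
    g S = 0 := by
  classical
  induction S using Finset.strongInduction with
  | _ S ih =>
    have hsub : ∑ A ∈ S.powerset.erase S, g A = 0 :=
      sum_eq_zero fun A hA => ih A <| ssubset_iff_subset_ne.2
        ⟨mem_powerset.1 (mem_of_mem_erase hA), ne_of_mem_erase hA⟩
    simpa [← add_sum_erase _ _ (mem_powerset_self S), hsub] using h S

theorem Finset.card_filter_card_le (α : Type*) [Fintype α] (r : ℕ) :
    #{A : Finset α | #A ≤ r} = ∑ i ∈ range (r + 1), (Fintype.card α).choose i := by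
  classical
  rw [card_eq_sum_card_fiberwise (f := card) (t := range (r + 1))
    fun A hA => by simpa [Nat.lt_succ_iff] using hA]
  refine sum_congr rfl fun i hi => ?_
  rw [filter_filter, ← card_univ, ← card_powersetCard, powersetCard_eq_filter, powerset_univ]
  congr 1
  ext A
  simp only [mem_filter, mem_univ, true_and, and_iff_right_iff_imp]
  rintro rfl
  exact Nat.lt_succ_iff.1 (mem_range.1 hi)

lemma vA_indicator (m : ℕ) (A S : Finset (Fin m)) :
    vA m A (fun i => if i ∈ S then 1 else 0) = if A ⊆ S then 1 else 0 := by
  by_cases hAS : A ⊆ S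
  · rw [if_pos hAS]
    exact prod_eq_one fun i hi => if_pos (hAS hi)
  · rw [if_neg hAS]
    obtain ⟨i, hiA, hiS⟩ := not_subset.1 hAS
    exact prod_eq_zero hiA (if_neg hiS)

theorem linearIndependent_vA (m : ℕ) : LinearIndependent (ZMod 2) (vA m) := by
  classical
  rw [Fintype.linearIndependent_iff]
  intro g hg
  refine eq_zero_of_forall_sum_powerset_eq_zero fun S => ?_
  have := congrFun hg fun i => if i ∈ S then 1 else 0
  simpa [vA_indicator, ← sum_filter, filter_subset_univ] using this

theorem RM_eq_span_range (m r : ℕ) :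
    RM m r =
      Submodule.span (ZMod 2) (Set.range fun A : {A : Finset (Fin m) // #A ≤ r} => vA m A) := by
  unfold RM
  congr 1
  ext f
  constructor
  · rintro ⟨A, hA, rfl⟩; exact ⟨⟨A, hA⟩, rfl⟩
  · rintro ⟨⟨A, hA⟩, rfl⟩; exact ⟨A, hA, rfl⟩

theorem rm_finrank_general (m r : ℕ) :
    Module.finrank (ZMod 2) (RM m r) = ∑ i ∈ Finset.range (r + 1), m.choose i := by
  have hli : LinearIndependent (ZMod 2) fun A : {A : Finset (Fin m) // #A ≤ r} => vA m A :=
    (linearIndependent_vA m).comp _ Subtype.val_injective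
  rw [RM_eq_span_range, finrank_span_eq_card hli, Fintype.card_subtype, card_filter_card_le,
    Fintype.card_fin]

/-- The dimension of `RM(m,r)` is `∑_{i=0}^{r} C(m,i)`. -/
theorem rm_finrank (m r : ℕ) (h : r ≤ m) :
    Module.finrank (ZMod 2) (RM m r) = ∑ i ∈ Finset.range (r + 1), m.choose i :=
  rm_finrank_general m r
end

section
/- Let P : MvPolynomial (Fin m) (ZMod 2) have total degree at most r, let B be a ZMod 2-submodule of Fin m → ZMod 2 with finrank at least r + 1, and let a : Fin m → ZMod 2. Then the ZMod 2-sum of the evaluations of P over the affine coset a + B is zero: ∑_{z ∈ B} MvPolynomial.eval (a + z) P = 0 in ZMod 2 (the sum taken over all elements z of the finite submodule B). -/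
open scoped Classical

noncomputable section

open MvPolynomial

lemma aeval_totalDegree_le {m n : ℕ} (g : Fin m → MvPolynomial (Fin n) (ZMod 2))
    (hg : ∀ j, (g j).totalDegree ≤ 1) (P : MvPolynomial (Fin m) (ZMod 2)) :
    (MvPolynomial.aeval g P).totalDegree ≤ P.totalDegree := by
  rw [aeval_def, eval₂_eq]
  apply MvPolynomial.totalDegree_finsetSum_le
  intro d hd
  calc (algebraMap (ZMod 2) (MvPolynomial (Fin n) (ZMod 2)) (coeff d P)
          * ∏ i ∈ d.support, g i ^ d i).totalDegree
      ≤ (algebraMap (ZMod 2) (MvPolynomial (Fin n) (ZMod 2)) (coeff d P)).totalDegree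
          + (∏ i ∈ d.support, g i ^ d i).totalDegree := totalDegree_mul _ _
    _ ≤ 0 + ∑ i ∈ d.support, (g i ^ d i).totalDegree := by
        gcongr
        · rw [algebraMap_eq]; exact le_of_eq (totalDegree_C _)
        · exact totalDegree_finset_prod _ _
    _ ≤ ∑ i ∈ d.support, d i * 1 := by
        rw [zero_add]
        apply Finset.sum_le_sum
        intro j _
        exact (totalDegree_pow _ _).trans (by gcongr; exact hg j)
    _ = d.sum fun _ e => e := by simp [Finsupp.sum]
    _ ≤ P.totalDegree := le_totalDegree hd

/-- A polynomial of total degree at most `r` sums to zero over any affine coset of a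
subspace of dimension at least `r + 1`. -/
theorem poly_sum_over_coset_eq_zero (m r : ℕ)
    (P : MvPolynomial (Fin m) (ZMod 2)) (hP : P.totalDegree ≤ r)
    (B : Submodule (ZMod 2) (Fin m → ZMod 2))
    (hB : r + 1 ≤ Module.finrank (ZMod 2) B)
    (a : Fin m → ZMod 2) :
    ∑ z : B, MvPolynomial.eval (a + (z : Fin m → ZMod 2)) P = 0 := by
  set n := Module.finrank (ZMod 2) B with hn
  have : Module.Finite (ZMod 2) B := Module.Finite.of_finite
  let b : Module.Basis (Fin n) (ZMod 2) B := Module.finBasis (ZMod 2) B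
  let g : Fin m → MvPolynomial (Fin n) (ZMod 2) :=
    fun j => C (a j) + ∑ i, C ((b i : Fin m → ZMod 2) j) * X i
  have hg : ∀ j, (g j).totalDegree ≤ 1 := by
    intro j
    apply (totalDegree_add _ _).trans
    apply max_le
    · simp [totalDegree_C]
    · apply MvPolynomial.totalDegree_finsetSum_le
      intro i _
      apply (totalDegree_mul _ _).trans
      simp [totalDegree_C, totalDegree_X _]
  have key : ∀ c : Fin n → ZMod 2,
      eval c (aeval g P) = eval (a + ((∑ i, c i • b i : B) : Fin m → ZMod 2)) P := by
    intro c
    rw [aeval_def, eval_eval₂,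
      show (eval c).comp (algebraMap (ZMod 2) (MvPolynomial (Fin n) (ZMod 2))) = RingHom.id _
        from RingHom.ext fun x => by simp [algebraMap_eq],
      eval₂_id]
    have harg : (fun s => (eval c) (g s)) = a + ((∑ i, c i • b i : B) : Fin m → ZMod 2) := by
      funext j
      simp only [g, map_add, map_sum, map_mul, eval_C, eval_X]
      simp only [Pi.add_apply]
      congr 1
      rw [Submodule.coe_sum, Finset.sum_apply]
      apply Finset.sum_congr rfl
      intro i _
      rw [Submodule.coe_smul]
      simp [mul_comm]
    rw [harg]
  have hsum : ∑ c : Fin n → ZMod 2, eval c (aeval g P) = 0 := by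
    apply MvPolynomial.sum_eval_eq_zero
    have : (aeval g P).totalDegree ≤ r := (aeval_totalDegree_le g hg P).trans hP
    simpa using lt_of_le_of_lt this (by omega : r < n)
  calc ∑ z : B, MvPolynomial.eval (a + (z : Fin m → ZMod 2)) P
      = ∑ c : Fin n → ZMod 2, eval c (aeval g P) := by
        rw [← Equiv.sum_comp b.equivFun.toEquiv
          (fun c => eval c (aeval g P))]
        apply Finset.sum_congr rfl
        intro z _
        rw [key]
        congr 2
        conv_lhs => rw [← b.sum_equivFun z]
        rfl
    _ = 0 := hsum

end
end

section
/- Let M : Matrix (Fin 2) (Fin 2) (ZMod 2) be the matrix with M 0 0 = 1, M 0 1 = 0, M 1 0 = 1, M 1 1 = 1, and for m : ℕ define the m-fold Kronecker power P : (Fin m → Fin 2) → (Fin m → Fin 2) → ZMod 2 by P b z = ∏_{j : Fin m} M (b j) (z j). Then for every row index b : Fin m → Fin 2, the Hamming weight of row b, i.e. the cardinality of {z : Fin m → Fin 2 | P b z ≠ 0}, equals 2^{|{j : b j = 1}|}; consequently, for every i ≤ m, the number of rows b whose Hamming weight equals 2^{m-i} is exactly binomial(m, i). -/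
/-!
Since `M a x ≠ 0 ↔ x ≤ a`, the support of row `b` of the Kronecker power is the order ideal
`Iic b` of the product order on `Fin m → Fin 2`, a product of intervals of sizes `1` and `2`.
Hence the weight of row `b` is `2 ^ k` with `k` the number of ones of `b`, and the rows of
weight `2 ^ (m - i)` correspond to the `(m - i)`-subsets of `Fin m`.
-/

noncomputable section

/-- The 2×2 lower-triangular matrix `[[1,0],[1,1]]` over `ZMod 2`. -/
def M : Matrix (Fin 2) (Fin 2) (ZMod 2) := !![1, 0; 1, 1]

/-- The `m`-fold Kronecker power of `M`, with rows and columns indexed by binary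
vectors: `P b z = ∏_j M (b j) (z j)`. -/
def P (m : ℕ) : (Fin m → Fin 2) → (Fin m → Fin 2) → ZMod 2 :=
  fun b z => ∏ j : Fin m, M (b j) (z j)

open Finset

theorem Fin.val_add_one_eq_two_pow_ite (x : Fin 2) :
    (x : ℕ) + 1 = 2 ^ (if x = 1 then 1 else 0) := by
  revert x; decide

theorem Pi.card_Iic_fin_two {ι : Type*} [Fintype ι] [DecidableEq ι] (b : ι → Fin 2) :
    #(Iic b) = 2 ^ #{j | b j = 1} := by
  simp only [Pi.card_Iic, Fin.card_Iic, Fin.val_add_one_eq_two_pow_ite, prod_pow_eq_pow_sum,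
    card_filter]

def Fin.twoArrowEquivFinset (ι : Type*) [DecidableEq ι] [Fintype ι] :
    (ι → Fin 2) ≃ Finset ι where
  toFun b := {j | b j = 1}
  invFun s j := if j ∈ s then 1 else 0
  left_inv b := by
    funext j
    rcases Fin.exists_fin_two.mp ⟨b j, rfl⟩ with h | h <;> simp [h]
  right_inv s := by ext j; by_cases h : j ∈ s <;> simp [h]

theorem card_filter_card_eq_one_eq_choose {ι : Type*} [Fintype ι] [DecidableEq ι] (k : ℕ) :
    #{b : ι → Fin 2 | #{j | b j = 1} = k} = (Fintype.card ι).choose k := by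
  rw [← card_univ, ← card_powersetCard]
  exact card_equiv (Fin.twoArrowEquivFinset ι) (by simp [Fin.twoArrowEquivFinset])

theorem M_ne_zero_iff (a x : Fin 2) : M a x ≠ 0 ↔ x ≤ a := by
  fin_cases a <;> fin_cases x <;> simp [M]

theorem P_ne_zero_iff {m : ℕ} (b z : Fin m → Fin 2) : P m b z ≠ 0 ↔ z ≤ b := by
  simp only [P, prod_ne_zero_iff, mem_univ, true_imp_iff, M_ne_zero_iff, Pi.le_def]

theorem card_filter_P_ne_zero (m : ℕ) (b : Fin m → Fin 2) :
    #{z | P m b z ≠ 0} = 2 ^ #{j | b j = 1} := by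
  rw [← Pi.card_Iic_fin_two]
  congr 1
  ext z
  simp [P_ne_zero_iff]

/-- Each row `b` of the Kronecker power has Hamming weight `2^{#{j : b j = 1}}`;
consequently, for each `i ≤ m` exactly `C(m,i)` rows have Hamming weight `2^{m-i}`. -/
theorem kronecker_row_weights (m : ℕ) :
    (∀ b : Fin m → Fin 2,
      (Finset.univ.filter (fun z : Fin m → Fin 2 => P m b z ≠ 0)).card
        = 2 ^ (Finset.univ.filter (fun j : Fin m => b j = 1)).card) ∧
    (∀ i : ℕ, i ≤ m →
      (Finset.univ.filter (fun b : Fin m → Fin 2 =>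
          (Finset.univ.filter (fun z : Fin m → Fin 2 => P m b z ≠ 0)).card
            = 2 ^ (m - i))).card
        = m.choose i) := by
  refine ⟨card_filter_P_ne_zero m, fun i hi => ?_⟩
  calc #{b | #{z | P m b z ≠ 0} = 2 ^ (m - i)}
      = #{b : Fin m → Fin 2 | #{j | b j = 1} = m - i} := by
        congr 1
        ext b
        simp [card_filter_P_ne_zero, (Nat.pow_right_injective le_rfl).eq_iff]
    _ = m.choose (m - i) := by rw [card_filter_card_eq_one_eq_choose, Fintype.card_fin]
    _ = m.choose i := Nat.choose_symm hi

end
end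

section
/- (Piling-up identity underlying the LLR projection rule.) Let ι be a finite index set and p : ι → ℝ. Then ∑_{b : ι → ZMod 2, ∑_{i} b i = 1} ∏_{i} (if b i = 1 then p i else 1 - p i) = (1 - ∏_{i} (1 - 2 · p i)) / 2, where the outer sum ranges over all functions b : ι → ZMod 2 whose coordinate sum in ZMod 2 equals 1 (i.e., with an odd number of ones), and the inner sum and products are over all i ∈ ι. -/
/-!
Write `q i x` for the probability that the `i`-th bit equals `x`. Expanding products of sums,
`∑_b ∏ q i (b i) = ∏ (q i 0 + q i 1) = 1`, while weighting each `b` by the sign `(-1) ^ (∑ b)`,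
which is multiplicative in the bits, gives `∏ (q i 0 - q i 1) = ∏ (1 - 2 p i)`. The difference
of the two sums is twice the sum over the `b` with odd parity.
-/

open Finset

theorem AddChar.map_sum_eq_prod {ι A M : Type*} [AddCommMonoid A] [CommMonoid M]
    (ψ : AddChar A M) (s : Finset ι) (f : ι → A) :
    ψ (∑ i ∈ s, f i) = ∏ i ∈ s, ψ (f i) := by
  classical
  induction s using Finset.induction_on with
  | empty => simp
  | insert a s ha ih => rw [sum_insert ha, prod_insert ha, AddChar.map_add_eq_mul, ih]

namespace ZMod

variable {R : Type*} [CommRing R]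

def signChar : AddChar (ZMod 2) R := AddChar.zmodChar 2 (neg_one_sq : (-1 : R) ^ 2 = 1)

@[simp] theorem signChar_zero : signChar (0 : ZMod 2) = (1 : R) := AddChar.map_zero_eq_one _

@[simp] theorem signChar_one : signChar (1 : ZMod 2) = (-1 : R) := pow_one _

theorem two_mul_sum_filter_eq_one {α : Type*} [Fintype α] (χ : α → ZMod 2) (f : α → R) :
    2 * ∑ a ∈ univ.filter (χ · = 1), f a = ∑ a, f a - ∑ a, signChar (χ a) * f a := by
  have hχ : ∀ a, χ a ≠ 1 → χ a = 0 := fun a => by generalize χ a = x; revert x; decide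
  rw [← sum_filter_add_sum_filter_not univ (χ · = 1) f,
    ← sum_filter_add_sum_filter_not univ (χ · = 1) (fun a => signChar (χ a) * f a)]
  have hodd : ∑ a ∈ univ.filter (χ · = 1), signChar (χ a) * f a
      = -∑ a ∈ univ.filter (χ · = 1), f a := by
    rw [← sum_neg_distrib]
    refine sum_congr rfl fun a ha => ?_
    rw [(mem_filter.1 ha).2, signChar_one, neg_one_mul]
  have heven : ∑ a ∈ univ.filter (¬χ · = 1), signChar (χ a) * f a
      = ∑ a ∈ univ.filter (¬χ · = 1), f a :=
    sum_congr rfl fun a ha => by rw [hχ a (mem_filter.1 ha).2, signChar_zero, one_mul]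
  rw [hodd, heven]
  ring

variable {ι : Type*} [Fintype ι] [DecidableEq ι]

theorem sum_pi_prod (q : ι → ZMod 2 → R) :
    ∑ b : ι → ZMod 2, ∏ i, q i (b i) = ∏ i, (q i 0 + q i 1) := by
  rw [← Fintype.prod_sum]
  exact prod_congr rfl fun i _ => Fin.sum_univ_two (q i)

theorem sum_pi_signChar_mul_prod (q : ι → ZMod 2 → R) :
    ∑ b : ι → ZMod 2, signChar (∑ i, b i) * ∏ i, q i (b i) = ∏ i, (q i 0 - q i 1) := by
  simp only [AddChar.map_sum_eq_prod, ← prod_mul_distrib]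
  rw [sum_pi_prod fun i x => signChar x * q i x]
  simp [sub_eq_add_neg]

end ZMod

/-- The piling-up identity: the probability that the XOR of independent bits
(the `i`-th equal to `1` with probability `p i`) equals `1` is `(1 - ∏ (1 - 2 p i)) / 2`. -/
theorem piling_up (ι : Type*) [Fintype ι] [DecidableEq ι] (p : ι → ℝ) :
    ∑ b ∈ Finset.univ.filter (fun b : ι → ZMod 2 => (∑ i : ι, b i) = 1),
        ∏ i : ι, (if b i = 1 then p i else 1 - p i)
      = (1 - ∏ i : ι, (1 - 2 * p i)) / 2 := by
  set q : ι → ZMod 2 → ℝ := fun i x => if x = 1 then p i else 1 - p i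
  have htotal : ∑ b : ι → ZMod 2, ∏ i, q i (b i) = 1 := by
    rw [ZMod.sum_pi_prod]
    simp [q]
  have hsigned : ∑ b : ι → ZMod 2, ZMod.signChar (∑ i, b i) * ∏ i, q i (b i)
      = ∏ i, (1 - 2 * p i) := by
    rw [ZMod.sum_pi_signChar_mul_prod]
    refine prod_congr rfl fun i _ => ?_
    simp only [q, if_neg zero_ne_one, if_pos rfl]
    ring
  have hparity := ZMod.two_mul_sum_filter_eq_one (fun b : ι → ZMod 2 => ∑ i, b i)
    (fun b => ∏ i, q i (b i))
  rw [htotal, hsigned] at hparity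
  linarith
end

section
/- For all real numbers a and b, Real.tanh ((1/2) * Real.log ((1 + Real.exp (a + b)) / (Real.exp a + Real.exp b))) = Real.tanh (a / 2) * Real.tanh (b / 2). -/
/-!
Writing `L = e^ℓ` for the likelihood ratio of an LLR `ℓ`, one has `tanh (ℓ / 2) = (L - 1) / (L + 1)`.
The boxplus combination has likelihood ratio `(1 + L₁ L₂) / (L₁ + L₂)`, and the Cayley-type map
`L ↦ (L - 1) / (L + 1)` turns it into a product, since `1 + L₁ L₂ ∓ (L₁ + L₂) = (L₁ ∓ 1) (L₂ ∓ 1)`.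
-/

open Real

section Cayley

variable {K : Type*} [Field K]

def cayley (x : K) : K := (x - 1) / (x + 1)

theorem cayley_boxplus {x y : K} (hxy : x + y ≠ 0) :
    cayley ((1 + x * y) / (x + y)) = cayley x * cayley y := by
  have hsum : (1 + x * y) / (x + y) + 1 = (x + 1) * (y + 1) / (x + y) := by
    field_simp; ring
  have hdiff : (1 + x * y) / (x + y) - 1 = (x - 1) * (y - 1) / (x + y) := by
    field_simp; ring
  rw [cayley, hsum, hdiff, cayley, cayley, div_div_div_cancel_right₀ hxy, mul_div_mul_comm]

end Cayley

theorem tanh_half_eq_cayley_exp (x : ℝ) : tanh (x / 2) = cayley (exp x) := by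
  have hexp : exp x = exp (x / 2) * exp (x / 2) := by rw [← exp_add, add_halves]
  have hpos := exp_pos (x / 2)
  rw [tanh_eq, exp_neg, hexp, cayley]
  field_simp

theorem tanh_half_log {x : ℝ} (hx : 0 < x) : tanh (log x / 2) = cayley x := by
  rw [tanh_half_eq_cayley_exp, exp_log hx]

/-- The boxplus combination of two LLRs satisfies the tanh-product formula. -/
theorem tanh_half_boxplus (a b : ℝ) :
    Real.tanh ((1 / 2) * Real.log ((1 + Real.exp (a + b)) / (Real.exp a + Real.exp b)))
      = Real.tanh (a / 2) * Real.tanh (b / 2) := by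
  have ha := exp_pos a
  have hb := exp_pos b
  rw [one_div_mul_eq_div, tanh_half_log (by positivity), tanh_half_eq_cayley_exp,
    tanh_half_eq_cayley_exp, exp_add]
  exact cayley_boxplus (by positivity)
end
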